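/- Theorem 3 (sampling with replacement, combined Chernoff/Bernstein/Hoeffding): For every natural number k ≥ 1, real p ∈ (0,1], and real q > 1, a binomial B(k,p) random variable X̂ satisfies P(k·p/q ≤ X̂ ≤ q·k·p) ≥ 1 − Ω − Ψ, where σ² = p(1−p), Ω = min( (e^{q−1}/q^q)^{p·k} , exp(−k·(pq−p)²/(2σ² + 2(pq−p)/3)) , exp(−2p²(q−1)²k) ); and Ψ = min( (e^{1/q−1}·q^{1/q})^{p·k} , exp(−k·(p−p/q)²/(2σ² + 2(p−p/q)/3)) , exp(−2k(pq−1)²/q²) ) if p·q > 1, while Ψ = min( (e^{1/q−1}·q^{1/q})^{p·k} , exp(−k·(p−p/q)²/(2σ² + 2(p−p/q)/3)) ) if p·q ≤ 1. -/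

import Mathlib

open Classical in
/-- Probability that a binomial B(k,p) random variable satisfies predicate `P`. -/
noncomputable def binomProb (k : ℕ) (p : ℝ) (P : ℕ → Prop) : ℝ :=
  ∑ i ∈ Finset.range (k + 1),
    if P i then (k.choose i : ℝ) * p ^ i * (1 - p) ^ (k - i) else 0

/-!
By Markov's inequality applied to `exp (t * X)`, each tail of `X ~ B(k, p)` beyond `k * a` is at
most `(exp (-(t * a)) * (1 - p + p * exp t)) ^ k` for a suitably signed `t`. Each of the three
terms of `Ω` and `Ψ` comes from one bound on the Bernoulli moment generating function:
`1 + x ≤ exp x` (multiplicative Chernoff, `t = log q` or `-log q`), Bennett's bound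
`exp (σ² (exp |t| - 1 - |t|))` for the centred variable combined with
`(exp s - 1 - s) (1 - s / 3) ≤ s² / 2` (Bernstein), and Hoeffding's lemma `exp (t² / 8)`.
The two tails are then combined by a union bound.
-/

open Real Finset MeasureTheory ProbabilityTheory

lemma nonneg_of_hasDerivAt_nonneg {f f' : ℝ → ℝ} (hf : ∀ x, HasDerivAt f (f' x) x)
    (h0 : f 0 = 0) (hf' : ∀ x, 0 ≤ x → 0 ≤ f' x) {t : ℝ} (ht : 0 ≤ t) : 0 ≤ f t := by
  have hmono : MonotoneOn f (Set.Ici 0) :=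
    monotoneOn_of_hasDerivWithinAt_nonneg (convex_Ici 0)
      (fun x _ => (hf x).continuousAt.continuousWithinAt) (fun x _ => (hf x).hasDerivWithinAt)
      (fun x hx => hf' x (interior_subset hx))
  simpa [h0] using hmono Set.self_mem_Ici ht ht

lemma exp_mul_le_bennett {t x : ℝ} (ht : 0 ≤ t) (hx : x ≤ 1) :
    exp (t * x) ≤ 1 + t * x + x ^ 2 * (exp t - 1 - t) := by
  have hderiv : ∀ s, HasDerivAt (fun s => x ^ 2 * (exp s - 1 - s) - (exp (s * x) - 1 - s * x))
      (x ^ 2 * (exp s - 1) - x * (exp (s * x) - 1)) s := by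
    intro s
    have hsx : HasDerivAt (fun s => s * x) x s := by simpa using hasDerivAt_mul_const x
    exact ((((hasDerivAt_exp s).sub_const 1).sub (hasDerivAt_id' s)).const_mul (x ^ 2) |>.sub
      ((hsx.exp.sub_const 1).sub hsx)).congr_deriv (by ring)
  have hderiv_nonneg : ∀ s, 0 ≤ s → 0 ≤ x ^ 2 * (exp s - 1) - x * (exp (s * x) - 1) := by
    intro s _
    rcases le_or_gt 0 x with hx0 | hx0
    · have hconv : exp (s * x) ≤ x * exp s + (1 - x) := by
        simpa [mul_comm] using convexOn_exp.2 (Set.mem_univ s) (Set.mem_univ 0) hx0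
          (by linarith) (by ring : x + (1 - x) = 1)
      nlinarith
    · nlinarith [add_one_le_exp (s * x), add_one_le_exp s]
  linarith [nonneg_of_hasDerivAt_nonneg hderiv (by simp) hderiv_nonneg ht]

lemma bernoulli_mgf_le_bennett_of_nonneg {p t : ℝ} (hp0 : 0 ≤ p) (hp1 : p ≤ 1)
    (ht : 0 ≤ t) :
    exp (-(t * p)) * (1 - p + p * exp t) ≤ exp (p * (1 - p) * (exp t - 1 - t)) := by
  have hlo := exp_mul_le_bennett ht (by linarith : -p ≤ 1)
  have hhi := exp_mul_le_bennett ht (by linarith : 1 - p ≤ 1)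
  calc exp (-(t * p)) * (1 - p + p * exp t)
      = (1 - p) * exp (t * -p) + p * exp (t * (1 - p)) := by
        rw [mul_sub, mul_one, exp_sub, mul_neg, exp_neg]; field_simp
    _ ≤ p * (1 - p) * (exp t - 1 - t) + 1 := by
        nlinarith [mul_le_mul_of_nonneg_left hlo (sub_nonneg.2 hp1),
          mul_le_mul_of_nonneg_left hhi hp0]
    _ ≤ exp (p * (1 - p) * (exp t - 1 - t)) := add_one_le_exp _

lemma bernoulli_mgf_le_bennett {p : ℝ} (hp0 : 0 ≤ p) (hp1 : p ≤ 1) (t : ℝ) :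
    exp (-(t * p)) * (1 - p + p * exp t) ≤ exp (p * (1 - p) * (exp |t| - 1 - |t|)) := by
  rcases le_or_gt 0 t with ht | ht
  · rw [abs_of_nonneg ht]
    exact bernoulli_mgf_le_bennett_of_nonneg hp0 hp1 ht
  · -- `exp (-(t * p)) * (1 - p + p * exp t)` is symmetric under `(p, t) ↦ (1 - p, -t)`
    have h := bernoulli_mgf_le_bennett_of_nonneg (sub_nonneg.2 hp1) (sub_le_self 1 hp0)
      (neg_nonneg.2 ht.le)
    rw [abs_of_neg ht]
    convert h using 1
    · rw [show -(-t * (1 - p)) = t + -(t * p) by ring, exp_add, exp_neg t]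
      field_simp
      ring
    · ring_nf

lemma bernoulli_mgf_le_hoeffding {p : ℝ} (hp0 : 0 ≤ p) (hp1 : p ≤ 1) (t : ℝ) :
    exp (-(t * p)) * (1 - p + p * exp t) ≤ exp (t ^ 2 / 8) := by
  set μ : Measure ℝ := bernoulliMeasure 1 0 ⟨p, hp0, hp1⟩
  have hX : ∀ᵐ x ∂μ, id x ∈ Set.Icc (0 : ℝ) 1 := by
    rw [ae_iff]
    exact bernoulliMeasure_apply_of_notMem_of_notMem _ measurableSet_Icc.compl (by simp) (by simp)
  have h := (hasSubgaussianMGF_of_mem_Icc aemeasurable_id hX).mgf_le t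
  have hmgf : mgf (fun x => id x - μ[id]) μ t = exp (-(t * p)) * (1 - p + p * exp t) := by
    simp [mgf, μ, integral_bernoulliMeasure, mul_sub, exp_sub, exp_neg]
    field_simp
    ring
  rw [hmgf] at h
  convert h using 2
  norm_num
  ring

lemma exp_sub_one_sub_mul_one_sub_div_three_le {t : ℝ} (ht : 0 ≤ t) :
    (exp t - 1 - t) * (1 - t / 3) ≤ t ^ 2 / 2 := by
  have hlin : ∀ s : ℝ, HasDerivAt (fun s => 1 - s / 3) (-(1 / 3)) s := fun s => by
    simpa using ((hasDerivAt_id' s).div_const 3).const_sub 1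
  have hd1 : ∀ s, HasDerivAt (fun s => s ^ 2 / 2 - (exp s - 1 - s) * (1 - s / 3))
      (s - (exp s - 1) * (1 - s / 3) + (exp s - 1 - s) / 3) s := fun s =>
    (((hasDerivAt_pow 2 s).div_const 2).sub
      ((((hasDerivAt_exp s).sub_const 1).sub (hasDerivAt_id' s)).mul (hlin s))).congr_deriv
      (by simp only [Pi.sub_apply]; ring)
  have hd2 : ∀ s, HasDerivAt (fun s => s - (exp s - 1) * (1 - s / 3) + (exp s - 1 - s) / 3)
      ((1 - (1 - s) * exp s) / 3) s := fun s =>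
    (((hasDerivAt_id' s).sub (((hasDerivAt_exp s).sub_const 1).mul (hlin s))).add
      ((((hasDerivAt_exp s).sub_const 1).sub (hasDerivAt_id' s)).div_const 3)).congr_deriv
      (by ring)
  have hd2_nonneg : ∀ s, 0 ≤ (1 - (1 - s) * exp s) / 3 := by
    intro s
    have h : (1 - s) * exp s ≤ 1 := by
      calc (1 - s) * exp s ≤ exp (-s) * exp s := by gcongr; linarith [add_one_le_exp (-s)]
        _ = 1 := by rw [← exp_add, neg_add_cancel, exp_zero]
    linarith
  linarith [nonneg_of_hasDerivAt_nonneg hd1 (by simp)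
    (fun s hs => nonneg_of_hasDerivAt_nonneg hd2 (by simp) (fun s _ => hd2_nonneg s) hs) ht]

lemma exists_bernstein_exponent_le {v δ : ℝ} (hv : 0 ≤ v) (hδ : 0 < δ) :
    ∃ s, 0 ≤ s ∧ v * (exp s - 1 - s) - s * δ ≤ -(δ ^ 2 / (2 * v + 2 * δ / 3)) := by
  have hden : 0 < v + δ / 3 := by positivity
  set s := δ / (v + δ / 3) with hs_def
  have hs : s * (v + δ / 3) = δ := div_mul_cancel₀ δ hden.ne'
  have hv_eq : v = (1 - s / 3) * (v + δ / 3) := by linear_combination (1 / 3) * hs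
  have hs0 : 0 ≤ s := by positivity
  refine ⟨s, hs0, ?_⟩
  calc v * (exp s - 1 - s) - s * δ
      = (exp s - 1 - s) * (1 - s / 3) * (v + δ / 3) - s * δ := by
        linear_combination (exp s - 1 - s) * hv_eq
    _ ≤ s ^ 2 / 2 * (v + δ / 3) - s * δ := by
        gcongr
        exact exp_sub_one_sub_mul_one_sub_div_three_le hs0
    _ = -(s * δ / 2) := by linear_combination (s / 2) * hs
    _ = -(δ ^ 2 / (2 * v + 2 * δ / 3)) := by rw [hs_def]; field_simp

section BinomProb

variable {k : ℕ} {p : ℝ}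

lemma choose_mul_pow_mul_pow_nonneg (hp0 : 0 ≤ p) (hp1 : p ≤ 1) (i : ℕ) :
    0 ≤ (k.choose i : ℝ) * p ^ i * (1 - p) ^ (k - i) := by
  have := sub_nonneg.2 hp1
  positivity

lemma binomProb_add_binomProb_not (P : ℕ → Prop) :
    binomProb k p P + binomProb k p (fun i => ¬ P i) = 1 := by
  classical
  calc binomProb k p P + binomProb k p (fun i => ¬ P i)
      = ∑ i ∈ range (k + 1), p ^ i * (1 - p) ^ (k - i) * (k.choose i : ℝ) := by
        unfold binomProb
        rw [← sum_add_distrib]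
        refine sum_congr rfl fun i _ => ?_
        by_cases h : P i <;> simp [h] <;> ring
    _ = 1 := by rw [← add_pow, add_sub_cancel, one_pow]

lemma binomProb_mono (hp0 : 0 ≤ p) (hp1 : p ≤ 1) {P Q : ℕ → Prop} (h : ∀ i, P i → Q i) :
    binomProb k p P ≤ binomProb k p Q := by
  classical
  unfold binomProb
  refine sum_le_sum fun i _ => ?_
  have := choose_mul_pow_mul_pow_nonneg (k := k) hp0 hp1 i
  by_cases hP : P i <;> by_cases hQ : Q i <;> simp_all

lemma binomProb_or_le (hp0 : 0 ≤ p) (hp1 : p ≤ 1) (P Q : ℕ → Prop) :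
    binomProb k p (fun i => P i ∨ Q i) ≤ binomProb k p P + binomProb k p Q := by
  classical
  unfold binomProb
  rw [← sum_add_distrib]
  refine sum_le_sum fun i _ => ?_
  have := choose_mul_pow_mul_pow_nonneg (k := k) hp0 hp1 i
  by_cases hP : P i <;> by_cases hQ : Q i <;> simp_all

lemma one_sub_sub_le_binomProb (hp0 : 0 ≤ p) (hp1 : p ≤ 1) {P Q R : ℕ → Prop}
    (h : ∀ i, ¬ P i → Q i ∨ R i) :
    1 - binomProb k p Q - binomProb k p R ≤ binomProb k p P := by
  have hsum := binomProb_add_binomProb_not (k := k) (p := p) P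
  have hor := binomProb_or_le (k := k) hp0 hp1 Q R
  have hmono := binomProb_mono (k := k) hp0 hp1 h
  linarith

lemma binomProb_le_pow (hp0 : 0 ≤ p) (hp1 : p ≤ 1) (t b : ℝ) :
    binomProb k p (fun i => t * (k * b) ≤ t * i)
      ≤ (exp (-(t * b)) * (1 - p + p * exp t)) ^ k := by
  classical
  calc binomProb k p (fun i => t * (k * b) ≤ t * i)
      ≤ ∑ i ∈ range (k + 1),
          exp (-(t * (k * b))) * ((p * exp t) ^ i * (1 - p) ^ (k - i) * (k.choose i : ℝ)) := by
        unfold binomProb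
        refine sum_le_sum fun i _ => ?_
        have hterm := choose_mul_pow_mul_pow_nonneg (k := k) hp0 hp1 i
        split_ifs with h
        · -- Markov: on the event, `1 ≤ exp (t * i - t * (k * b))`
          have hexp : 1 ≤ exp (-(t * (k * b))) * exp t ^ i := by
            rw [← exp_nat_mul, ← exp_add]
            exact one_le_exp (by linarith)
          calc (k.choose i : ℝ) * p ^ i * (1 - p) ^ (k - i)
              ≤ (k.choose i : ℝ) * p ^ i * (1 - p) ^ (k - i) *
                  (exp (-(t * (k * b))) * exp t ^ i) := le_mul_of_one_le_right hterm hexp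
            _ = _ := by ring
        · positivity
    _ = (exp (-(t * b)) * (1 - p + p * exp t)) ^ k := by
        rw [← mul_sum, ← add_pow, mul_pow, ← exp_nat_mul]
        ring_nf

lemma binomProb_le_exp_of_centered_mgf_le (hp0 : 0 ≤ p) (hp1 : p ≤ 1) {t a c : ℝ}
    (h : exp (-(t * p)) * (1 - p + p * exp t) ≤ exp c) :
    binomProb k p (fun i => t * (k * a) ≤ t * i) ≤ exp (k * (c - t * (a - p))) := by
  have hper : exp (-(t * a)) * (1 - p + p * exp t) ≤ exp (c - t * (a - p)) := by
    calc exp (-(t * a)) * (1 - p + p * exp t)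
        = exp (-(t * (a - p))) * (exp (-(t * p)) * (1 - p + p * exp t)) := by
          rw [← mul_assoc, ← exp_add]; ring_nf
      _ ≤ exp (-(t * (a - p))) * exp c := by gcongr
      _ = exp (c - t * (a - p)) := by rw [← exp_add]; ring_nf
  calc binomProb k p (fun i => t * (k * a) ≤ t * i)
      ≤ (exp (-(t * a)) * (1 - p + p * exp t)) ^ k := binomProb_le_pow hp0 hp1 t a
    _ ≤ exp (c - t * (a - p)) ^ k := by
        have := sub_nonneg.2 hp1
        gcongr
    _ = exp (k * (c - t * (a - p))) := by rw [← exp_nat_mul]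

lemma binomProb_le_chernoff (hp0 : 0 ≤ p) (hp1 : p ≤ 1) {r : ℝ} (hr : 0 < r) :
    binomProb k p (fun i => log r * (k * (p * r)) ≤ log r * i)
      ≤ (exp (r - 1) / r ^ r) ^ (p * k) := by
  have hmgf : 1 - p + p * exp (log r) ≤ exp (p * (r - 1)) := by
    rw [exp_log hr]; linarith [add_one_le_exp (p * (r - 1))]
  calc binomProb k p (fun i => log r * (k * (p * r)) ≤ log r * i)
      ≤ (exp (-(log r * (p * r))) * (1 - p + p * exp (log r))) ^ k :=
        binomProb_le_pow hp0 hp1 _ _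
    _ ≤ (exp (-(log r * (p * r))) * exp (p * (r - 1))) ^ k := by
        have := sub_nonneg.2 hp1
        gcongr
    _ = (exp (r - 1) / r ^ r) ^ (p * k) := by
        rw [rpow_def_of_pos hr, ← exp_sub, ← exp_add, ← exp_nat_mul, ← exp_mul]
        ring_nf

lemma binomProb_upper_tail_le_chernoff (hp0 : 0 ≤ p) (hp1 : p ≤ 1) {q : ℝ} (hq : 1 ≤ q) :
    binomProb k p (fun i => k * (p * q) ≤ i) ≤ (exp (q - 1) / q ^ q) ^ (p * k) :=
  (binomProb_mono hp0 hp1 fun _ hi => mul_le_mul_of_nonneg_left hi (log_nonneg hq)).trans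
    (binomProb_le_chernoff hp0 hp1 (by linarith))

lemma binomProb_lower_tail_le_chernoff (hp0 : 0 ≤ p) (hp1 : p ≤ 1) {q : ℝ} (hq : 1 ≤ q) :
    binomProb k p (fun i => i ≤ k * (p / q)) ≤ (exp (1 / q - 1) * q ^ (1 / q)) ^ (p * k) := by
  have hq0 : 0 < q := by linarith
  have h := binomProb_le_chernoff (k := k) hp0 hp1 (inv_pos.2 hq0)
  rw [inv_rpow hq0.le, div_inv_eq_mul, ← div_eq_mul_inv] at h
  rw [one_div]
  have hlog : log q⁻¹ ≤ 0 := log_nonpos (inv_nonneg.2 hq0.le) (inv_le_one_of_one_le₀ hq)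
  exact (binomProb_mono hp0 hp1 fun _ hi => mul_le_mul_of_nonpos_left hi hlog).trans h

lemma binomProb_le_bennett (hp0 : 0 ≤ p) (hp1 : p ≤ 1) (t a : ℝ) :
    binomProb k p (fun i => t * (k * a) ≤ t * i)
      ≤ exp (k * (p * (1 - p) * (exp |t| - 1 - |t|) - t * (a - p))) :=
  binomProb_le_exp_of_centered_mgf_le hp0 hp1 (bernoulli_mgf_le_bennett hp0 hp1 t)

lemma binomProb_upper_tail_le_bernstein (hp0 : 0 ≤ p) (hp1 : p ≤ 1) {a : ℝ} (hpa : p < a) :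
    binomProb k p (fun i => k * a ≤ i)
      ≤ exp (-(k * (a - p) ^ 2) / (2 * (p * (1 - p)) + 2 * (a - p) / 3)) := by
  obtain ⟨s, hs0, hs⟩ :=
    exists_bernstein_exponent_le (mul_nonneg hp0 (sub_nonneg.2 hp1)) (sub_pos.2 hpa)
  calc binomProb k p (fun i => k * a ≤ i)
      ≤ binomProb k p (fun i => s * (k * a) ≤ s * i) :=
        binomProb_mono hp0 hp1 fun i hi => mul_le_mul_of_nonneg_left hi hs0
    _ ≤ exp (k * (p * (1 - p) * (exp |s| - 1 - |s|) - s * (a - p))) :=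
        binomProb_le_bennett hp0 hp1 s a
    _ ≤ _ := by
        rw [abs_of_nonneg hs0, exp_le_exp, neg_div, mul_div_assoc, ← mul_neg]
        gcongr

lemma binomProb_lower_tail_le_bernstein (hp0 : 0 ≤ p) (hp1 : p ≤ 1) {a : ℝ} (hap : a < p) :
    binomProb k p (fun i => i ≤ k * a)
      ≤ exp (-(k * (p - a) ^ 2) / (2 * (p * (1 - p)) + 2 * (p - a) / 3)) := by
  obtain ⟨s, hs0, hs⟩ :=
    exists_bernstein_exponent_le (mul_nonneg hp0 (sub_nonneg.2 hp1)) (sub_pos.2 hap)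
  calc binomProb k p (fun i => i ≤ k * a)
      ≤ binomProb k p (fun i => -s * (k * a) ≤ -s * i) :=
        binomProb_mono hp0 hp1 fun i hi => mul_le_mul_of_nonpos_left hi (neg_nonpos.2 hs0)
    _ ≤ exp (k * (p * (1 - p) * (exp |-s| - 1 - |-s|) - -s * (a - p))) :=
        binomProb_le_bennett hp0 hp1 (-s) a
    _ ≤ _ := by
        rw [abs_neg, abs_of_nonneg hs0, exp_le_exp, neg_div, mul_div_assoc, ← mul_neg,
          show -s * (a - p) = s * (p - a) by ring]
        gcongr

lemma binomProb_le_hoeffding (hp0 : 0 ≤ p) (hp1 : p ≤ 1) (a : ℝ) :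
    binomProb k p (fun i => 4 * (a - p) * (k * a) ≤ 4 * (a - p) * i)
      ≤ exp (-(2 * k * (a - p) ^ 2)) := by
  convert binomProb_le_exp_of_centered_mgf_le hp0 hp1
    (bernoulli_mgf_le_hoeffding hp0 hp1 (4 * (a - p))) using 2
  ring

lemma binomProb_upper_tail_le_hoeffding (hp0 : 0 ≤ p) (hp1 : p ≤ 1) {a : ℝ} (hpa : p ≤ a) :
    binomProb k p (fun i => k * a ≤ i) ≤ exp (-(2 * k * (a - p) ^ 2)) :=
  (binomProb_mono hp0 hp1 fun _ hi => mul_le_mul_of_nonneg_left hi (by linarith)).trans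
    (binomProb_le_hoeffding hp0 hp1 a)

lemma binomProb_lower_tail_le_hoeffding (hp0 : 0 ≤ p) (hp1 : p ≤ 1) {a : ℝ} (hap : a ≤ p) :
    binomProb k p (fun i => i ≤ k * a) ≤ exp (-(2 * k * (p - a) ^ 2)) := by
  rw [← neg_sq, neg_sub]
  exact (binomProb_mono hp0 hp1 fun _ hi => mul_le_mul_of_nonpos_left hi (by linarith)).trans
    (binomProb_le_hoeffding hp0 hp1 a)

lemma binomProb_lower_tail_le_hoeffding_of_one_lt_mul (hp0 : 0 ≤ p) (hp1 : p ≤ 1) {q : ℝ}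
    (hq : 1 ≤ q) (hpq : 1 < p * q) :
    binomProb k p (fun i => i ≤ k * (p / q)) ≤ exp (-(2 * k * (p * q - 1) ^ 2) / q ^ 2) := by
  have hq0 : 0 < q := by linarith
  refine (binomProb_lower_tail_le_hoeffding hp0 hp1 (div_le_self hp0 hq)).trans ?_
  -- the deviation `p - p / q` of the Hoeffding bound beats `(p * q - 1) / q = p - 1 / q`
  have hdev : (p * q - 1) ^ 2 / q ^ 2 ≤ (p - p / q) ^ 2 := by
    rw [← div_pow, sub_div, mul_div_cancel_right₀ p hq0.ne']
    have h1 : 0 ≤ p - 1 / q := by rw [sub_nonneg, div_le_iff₀ hq0]; linarith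
    have h2 : p / q ≤ 1 / q := by gcongr
    gcongr
  rw [exp_le_exp, neg_div, neg_le_neg_iff, mul_div_assoc]
  exact mul_le_mul_of_nonneg_left hdev (by positivity)

end BinomProb

open Classical in
theorem qerror_bound_with_replacement_full_general (k : ℕ) (p : ℝ)
    (hp0 : 0 < p) (hp1 : p ≤ 1) (q : ℝ) (hq : 1 < q) :
    1 - min (min ((Real.exp (q - 1) / q ^ q) ^ (p * k))
              (Real.exp (-(k * (p * q - p) ^ 2) / (2 * (p * (1 - p)) + 2 * (p * q - p) / 3))))
          (Real.exp (-2 * p ^ 2 * (q - 1) ^ 2 * k))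
      - (if 1 < p * q then
            min (min ((Real.exp (1 / q - 1) * q ^ (1 / q)) ^ (p * k))
                  (Real.exp (-(k * (p - p / q) ^ 2) / (2 * (p * (1 - p)) + 2 * (p - p / q) / 3))))
              (Real.exp (-(2 * k * (p * q - 1) ^ 2) / q ^ 2))
          else
            min ((Real.exp (1 / q - 1) * q ^ (1 / q)) ^ (p * k))
              (Real.exp (-(k * (p - p / q) ^ 2) / (2 * (p * (1 - p)) + 2 * (p - p / q) / 3)))) ≤
    binomProb k p (fun i => k * p / q ≤ (i : ℝ) ∧ (i : ℝ) ≤ q * k * p) := by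
  have hmul_gt : p < p * q := by nlinarith
  have hdiv_lt : p / q < p := div_lt_self hp0 hq
  have hsplit : ∀ i : ℕ, ¬ (k * p / q ≤ (i : ℝ) ∧ (i : ℝ) ≤ q * k * p) →
      k * (p * q) ≤ (i : ℝ) ∨ (i : ℝ) ≤ k * (p / q) := by
    intro i hi
    rw [mul_div_assoc, show q * k * p = k * (p * q) by ring, not_and_or, not_le, not_le] at hi
    exact hi.symm.imp le_of_lt le_of_lt
  refine le_trans (sub_le_sub (sub_le_sub_left ?upper 1) ?lower)
    (one_sub_sub_le_binomProb hp0.le hp1 hsplit)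
  case upper =>
    exact le_min (le_min (binomProb_upper_tail_le_chernoff hp0.le hp1 hq.le)
      (binomProb_upper_tail_le_bernstein hp0.le hp1 hmul_gt))
      ((binomProb_upper_tail_le_hoeffding hp0.le hp1 hmul_gt.le).trans_eq (by ring_nf))
  case lower =>
    have hchernoff := binomProb_lower_tail_le_chernoff (k := k) hp0.le hp1 hq.le
    have hbernstein := binomProb_lower_tail_le_bernstein (k := k) hp0.le hp1 hdiv_lt
    split_ifs with hpq1
    · exact le_min (le_min hchernoff hbernstein)
        (binomProb_lower_tail_le_hoeffding_of_one_lt_mul hp0.le hp1 hq.le hpq1)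
    · exact le_min hchernoff hbernstein

open Classical in
theorem qerror_bound_with_replacement_full (k : ℕ) (hk : 1 ≤ k) (p : ℝ)
    (hp0 : 0 < p) (hp1 : p ≤ 1) (q : ℝ) (hq : 1 < q) :
    1 - min (min ((Real.exp (q - 1) / q ^ q) ^ (p * k))
              (Real.exp (-(k * (p * q - p) ^ 2) / (2 * (p * (1 - p)) + 2 * (p * q - p) / 3))))
          (Real.exp (-2 * p ^ 2 * (q - 1) ^ 2 * k))
      - (if 1 < p * q then
            min (min ((Real.exp (1 / q - 1) * q ^ (1 / q)) ^ (p * k))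
                  (Real.exp (-(k * (p - p / q) ^ 2) / (2 * (p * (1 - p)) + 2 * (p - p / q) / 3))))
              (Real.exp (-(2 * k * (p * q - 1) ^ 2) / q ^ 2))
          else
            min ((Real.exp (1 / q - 1) * q ^ (1 / q)) ^ (p * k))
              (Real.exp (-(k * (p - p / q) ^ 2) / (2 * (p * (1 - p)) + 2 * (p - p / q) / 3)))) ≤
    binomProb k p (fun i => k * p / q ≤ (i : ℝ) ∧ (i : ℝ) ≤ q * k * p) :=
  qerror_bound_with_replacement_full_general k p hp0 hp1 q hq
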